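/- For every n ≥ 1, the minimum size of an incremental dominating set of the path P_n given in the standard order is ⌈n/2⌉. -/

import Mathlib

/-- `D` is a dominating set of the prefix graph `G_i` (induced on the first `i`
vertices `v_1, …, v_i`, i.e. the vertices of `Fin n` with value `< i`);
here `D` is assumed to consist of vertices of the prefix, so that adjacency
in `G_i` coincides with adjacency in `G`. -/
def PrefixDom {n : ℕ} (G : SimpleGraph (Fin n)) (i : ℕ) (D : Finset (Fin n)) : Prop :=
  ∀ v : Fin n, v.val < i → v ∈ D ∨ ∃ u ∈ D, G.Adj u v

/-- The natural ordering `v_1, …, v_n` of `Fin n` is always-connected: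
every prefix graph `G_i` (for `1 ≤ i ≤ n`) is connected. -/
def AlwaysConnected {n : ℕ} (G : SimpleGraph (Fin n)) : Prop :=
  ∀ i : ℕ, 1 ≤ i → i ≤ n → (G.induce {v : Fin n | v.val < i}).Connected

/-- `D 1 ⊆ D 2 ⊆ ⋯ ⊆ D n` is a chain in which each `D i` is a subset of
`{v_1, …, v_i}` that is a dominating set of the prefix graph `G_i`. -/
def IncDomChain {n : ℕ} (G : SimpleGraph (Fin n)) (D : ℕ → Finset (Fin n)) : Prop :=
  (∀ i : ℕ, 1 ≤ i → i < n → D i ⊆ D (i + 1)) ∧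
  (∀ i : ℕ, 1 ≤ i → i ≤ n → (∀ v ∈ D i, v.val < i) ∧ PrefixDom G i (D i))

/-- `R` is an incremental dominating set of `G`: the final set `D n` of some
incremental dominating chain. -/
def IsIncDomSet {n : ℕ} (G : SimpleGraph (Fin n)) (R : Finset (Fin n)) : Prop :=
  ∃ D : ℕ → Finset (Fin n), IncDomChain G D ∧ R = D n

/-- An incremental connected dominating chain: additionally, each `D i`
induces a connected subgraph. -/
def IncConnDomChain {n : ℕ} (G : SimpleGraph (Fin n)) (D : ℕ → Finset (Fin n)) : Prop :=
  IncDomChain G D ∧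
    ∀ i : ℕ, 1 ≤ i → i ≤ n → (G.induce (↑(D i) : Set (Fin n))).Connected

/-- `R` is an incremental connected dominating set of `G`. -/
def IsIncConnDomSet {n : ℕ} (G : SimpleGraph (Fin n)) (R : Finset (Fin n)) : Prop :=
  ∃ D : ℕ → Finset (Fin n), IncConnDomChain G D ∧ R = D n

/-!
A set `R` is an incremental dominating set in the order `v_1, …, v_n` exactly when every vertex
is dominated by a vertex of `R` that precedes or equals it (take `D_i = R ∩ {v_1, …, v_i}`).
On the path, `v_{2k+1}` can then only be dominated by `v_{2k}` or `v_{2k+1}`; these pairs are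
disjoint for different `k`, so `|R| ≥ ⌈n/2⌉`, and `v_1, v_3, v_5, …` attains the bound.
With `v_{i+1}` encoded as `i : Fin n`, these are the vertices of even value.
-/

open Finset

section

variable {n : ℕ} {G : SimpleGraph (Fin n)}

theorem IncDomChain.mono {D : ℕ → Finset (Fin n)} (hD : IncDomChain G D) {i j : ℕ}
    (hi : 1 ≤ i) (hij : i ≤ j) (hj : j ≤ n) : D i ⊆ D j := by
  induction j, hij using Nat.le_induction with
  | base => exact subset_rfl
  | succ j hij ih => exact (ih (by omega)).trans (hD.1 j (by omega) (by omega))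

theorem isIncDomSet_iff {R : Finset (Fin n)} :
    IsIncDomSet G R ↔ ∀ v, ∃ u ∈ R, u ≤ v ∧ (u = v ∨ G.Adj u v) := by
  constructor
  · rintro ⟨D, hD, rfl⟩ v
    obtain ⟨hprefix, hdom⟩ := hD.2 (v + 1) (by omega) v.isLt
    have hsub := hD.mono (by omega) v.isLt le_rfl
    rcases hdom v (by omega) with hv | ⟨u, hu, hadj⟩
    · exact ⟨v, hsub hv, le_rfl, Or.inl rfl⟩
    · exact ⟨u, hsub hu, Nat.lt_succ_iff.1 (hprefix u hu), Or.inr hadj⟩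
  · intro h
    refine ⟨fun i => {v ∈ R | v.val < i}, ⟨fun i _ _ => ?_, fun i _ _ => ⟨?_, ?_⟩⟩, ?_⟩
    · exact monotone_filter_right R fun _ _ => Nat.lt_succ_of_lt
    · intro v hv
      exact (mem_filter.1 hv).2
    · intro v hv
      obtain ⟨u, hu, huv, rfl | hadj⟩ := h v
      · exact Or.inl (mem_filter.2 ⟨hu, hv⟩)
      · exact Or.inr ⟨u, mem_filter.2 ⟨hu, lt_of_le_of_lt huv hv⟩, hadj⟩
    · exact (filter_true_of_mem fun v _ => v.isLt).symm

def evenVertices (n : ℕ) : Finset (Fin n) := {v | v.val % 2 = 0}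

theorem card_filter_range_mod_two_eq_zero (n : ℕ) : #{k ∈ range n | k % 2 = 0} = (n + 1) / 2 := by
  induction n with
  | zero => rfl
  | succ n ih =>
    rw [range_add_one, filter_insert]
    split_ifs with h
    · rw [card_insert_of_notMem (by simp), ih]; omega
    · rw [ih]; omega

theorem card_evenVertices : #(evenVertices n) = (n + 1) / 2 := by
  rw [← card_filter_range_mod_two_eq_zero, ← Nat.Iio_eq_range, ← Fin.map_valEmbedding_univ,
    filter_map, card_map]
  rfl

theorem isIncDomSet_evenVertices : IsIncDomSet (SimpleGraph.pathGraph n) (evenVertices n) := by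
  refine isIncDomSet_iff.2 fun v => ?_
  by_cases hv : v.val % 2 = 0
  · exact ⟨v, mem_filter.2 ⟨mem_univ _, hv⟩, le_rfl, Or.inl rfl⟩
  · refine ⟨⟨v - 1, by omega⟩, mem_filter.2 ⟨mem_univ _, ?_⟩, Fin.le_def.2 (Nat.sub_le _ _),
      Or.inr (SimpleGraph.pathGraph_adj.2 ?_)⟩ <;> simp only <;> omega

theorem IsIncDomSet.card_pathGraph_ge {R : Finset (Fin n)}
    (hR : IsIncDomSet (SimpleGraph.pathGraph n) R) : (n + 1) / 2 ≤ #R := by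
  calc (n + 1) / 2 = #(range ((n + 1) / 2)) := (card_range _).symm
    _ ≤ #R := card_le_card_of_surjOn (fun v => (v.val + 1) / 2) fun k hk => by
      simp only [coe_range, Set.mem_Iio] at hk
      obtain ⟨u, hu, hle, rfl | hadj⟩ := isIncDomSet_iff.1 hR ⟨2 * k, by omega⟩
      · exact ⟨_, hu, show (2 * k + 1) / 2 = k by omega⟩
      · rw [SimpleGraph.pathGraph_adj] at hadj
        rw [Fin.le_def] at hle
        exact ⟨u, hu, show (u.val + 1) / 2 = k by simp only at hadj hle; omega⟩

end

theorem min_inc_dominating_path_general {n : ℕ} :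
    IsLeast {k : ℕ | ∃ R : Finset (Fin n),
        IsIncDomSet (SimpleGraph.pathGraph n) R ∧ R.card = k}
      ((n + 1) / 2) :=
  ⟨⟨evenVertices n, isIncDomSet_evenVertices, card_evenVertices⟩,
    fun _ ⟨_, hR, hcard⟩ => hcard ▸ hR.card_pathGraph_ge⟩

/-- For every `n ≥ 1`, the minimum size of an incremental dominating
set of the path `P_n` given in the standard order is `⌈n/2⌉`. -/
theorem min_inc_dominating_path {n : ℕ} (hn : 1 ≤ n) :
    IsLeast {k : ℕ | ∃ R : Finset (Fin n),
        IsIncDomSet (SimpleGraph.pathGraph n) R ∧ R.card = k}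
      ((n + 1) / 2) :=
  min_inc_dominating_path_general
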